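/- Define φ_τ(y) = y + τ·V(y), P_τ(y) = (I + τ·DV(y))⁻¹ (where DV is the Jacobian matrix of V), M(τ) = ∫_Y det(I + τ·DV(y)) dy, and the averaged transported bilinear form value a(τ) = (1/M(τ))·∫_Y Σ_{i,r,k,s} A_{irks}(τ, y)·(Du(y)·P_τ(y))_{ks}·(Dv(y)·P_τ(y))_{ir}·det(I + τ·DV(y)) dy. Then there is ε > 0 such that a(τ) is well defined for |τ| < ε, a is differentiable at τ = 0, and a'(0) = (1/|Y|)·∫_Y Σ A_{irks}(0,y)·(δ_{rj}δ_{sl}·div V(y) − δ_{jr}·∂_s V_l(y) − δ_{ls}·∂_r V_j(y))·∂_l u_k(y)·∂_j v_i(y) dy + (1/|Y|)·∫_Y Σ ∂_τ A_{irks}(0,y)·∂_s u_k(y)·∂_r v_i(y) dy − a(0)·(1/|Y|)·∫_Y div V(y) dy, where |Y| = M(0) and repeated indices are summed over 1,…,n. -/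

import Mathlib

open MeasureTheory

/-- Jacobian matrix `Du(y)` of a map `u : ℝⁿ → ℝⁿ`: `(Du)_{kl} = ∂_l u_k`. -/
noncomputable def jacMat (n : ℕ) (u : (Fin n → ℝ) → (Fin n → ℝ)) (y : Fin n → ℝ) :
    Matrix (Fin n) (Fin n) ℝ :=
  Matrix.of fun k l => fderiv ℝ u y (Pi.single l 1) k

/-- Partial derivative `∂_j u_l(y)` of the `l`-th component in the `j`-th direction. -/
noncomputable def pder (n : ℕ) (u : (Fin n → ℝ) → (Fin n → ℝ)) (j l : Fin n)
    (y : Fin n → ℝ) : ℝ :=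
  fderiv ℝ u y (Pi.single j 1) l

/-- Divergence `div V(y) = Σ_i ∂_i V_i(y)`. -/
noncomputable def divg (n : ℕ) (V : (Fin n → ℝ) → (Fin n → ℝ)) (y : Fin n → ℝ) : ℝ :=
  ∑ i, fderiv ℝ V y (Pi.single i 1) i

/-- Kronecker delta. -/
def kdelta {n : ℕ} (i j : Fin n) : ℝ := if i = j then 1 else 0

/-- `P_τ(y) = (I + τ·DV(y))⁻¹`. -/
noncomputable def Pmat (n : ℕ) (V : (Fin n → ℝ) → (Fin n → ℝ)) (τ : ℝ)
    (y : Fin n → ℝ) : Matrix (Fin n) (Fin n) ℝ :=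
  ((1 : Matrix (Fin n) (Fin n) ℝ) + τ • jacMat n V y)⁻¹

/-- `M(τ) = ∫_Y det(I + τ·DV(y)) dy`. -/
noncomputable def Mfun (n : ℕ) (Y : Set (Fin n → ℝ))
    (V : (Fin n → ℝ) → (Fin n → ℝ)) (τ : ℝ) : ℝ :=
  ∫ y in Y, ((1 : Matrix (Fin n) (Fin n) ℝ) + τ • jacMat n V y).det

/-- The averaged transported bilinear-form value
`a(τ) = (1/M(τ))·∫_Y Σ_{irks} A_{irks}(τ,y)·(Du·P_τ)_{ks}·(Dv·P_τ)_{ir}·det(I + τ·DV) dy`. -/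
noncomputable def aForm (n : ℕ) (Y : Set (Fin n → ℝ))
    (V u v : (Fin n → ℝ) → (Fin n → ℝ))
    (A : ℝ × (Fin n → ℝ) → Fin n → Fin n → Fin n → Fin n → ℝ) (τ : ℝ) : ℝ :=
  (1 / Mfun n Y V τ) *
    ∫ y in Y,
      (∑ i, ∑ r, ∑ k, ∑ s,
          A (τ, y) i r k s * (jacMat n u y * Pmat n V τ y) k s *
            (jacMat n v y * Pmat n V τ y) i r) *
        ((1 : Matrix (Fin n) (Fin n) ℝ) + τ • jacMat n V y).det

/-!
Write `E_τ = I + τ DV`. Then `a(τ) = N(τ) / M(τ)` with `M(τ) = ∫_Y det E_τ` and `N(τ)` the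
integral over the fixed set `Y` of an expression `Φ(τ, y, DV y, Du y, Dv y)`. Although `DV`, `Du`,
`Dv` are only continuous, `Φ` is `C¹` jointly in all its arguments wherever `E_τ` is invertible,
so its `τ`-derivative is continuous on the compact set `[-δ, δ] × (closure Y)` and we may
differentiate under the integral sign. At `τ = 0` one has `E_0⁻¹ = I`, `(E_τ⁻¹)' = -DV` and
`(det E_τ)' = tr DV = div V`; contracting the Kronecker deltas gives the stated integrands, and
the quotient rule gives the formula. Finally `M(0) = |Y| > 0`, so `M ≠ 0` near `0` by continuity.
-/

open MeasureTheory Filter Topology Function Metric Matrix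

theorem IsCompact.exists_closedBall_prod_mapsTo {X E Z : Type*} [PseudoMetricSpace X]
    [TopologicalSpace E] [TopologicalSpace Z] {K : Set E} (hK : IsCompact K) {g : E → Z}
    (hg : Continuous g) {U : Set (X × Z)} (hU : IsOpen U) {x₀ : X}
    (hKU : ∀ y ∈ K, (x₀, g y) ∈ U) :
    ∃ δ > 0, Set.MapsTo (fun p : X × E => (p.1, g p.2)) (closedBall x₀ δ ×ˢ K) U := by
  have hnear : ∀ᶠ x in 𝓝 x₀, ∀ y ∈ K, (x, g y) ∈ U :=
    hK.eventually_forall_of_forall_eventually fun y hy =>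
      (continuous_fst.prodMk (hg.comp continuous_snd)).continuousAt.preimage_mem_nhds
        (hU.mem_nhds (hKU y hy))
  obtain ⟨δ, hδ, hball⟩ := eventually_nhds_iff_ball.mp hnear
  exact ⟨δ / 2, half_pos hδ, fun p hp =>
    hball p.1 (closedBall_subset_ball (half_lt_self hδ) hp.1) p.2 hp.2⟩

theorem hasDerivAt_setIntegral_of_contDiffOn {E Z : Type*} [TopologicalSpace E] [T2Space E]
    [MeasurableSpace E] [OpensMeasurableSpace E] {μ : Measure E} [IsFiniteMeasureOnCompacts μ]
    [NormedAddCommGroup Z] [NormedSpace ℝ Z] {Φ : ℝ → Z → ℝ} {U : Set (ℝ × Z)} (hU : IsOpen U)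
    (hΦ : ContDiffOn ℝ 1 (uncurry Φ) U) {g : E → Z} (hg : Continuous g) {K Y : Set E}
    (hK : IsCompact K) (hYK : Y ⊆ K) (hY : MeasurableSet Y) {τ₀ : ℝ}
    (hKU : ∀ y ∈ K, (τ₀, g y) ∈ U) {Φ' : E → ℝ}
    (hΦ' : ∀ y ∈ K, HasDerivAt (fun τ => Φ τ (g y)) (Φ' y) τ₀) :
    HasDerivAt (fun τ => ∫ y in Y, Φ τ (g y) ∂μ) (∫ y in Y, Φ' y ∂μ) τ₀ := by
  set G : ℝ × E → ℝ × Z := fun p => (p.1, g p.2)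
  have hG : Continuous G := by fun_prop
  obtain ⟨δ, hδ, hSU⟩ := hK.exists_closedBall_prod_mapsTo hg hU hKU
  set S := closedBall τ₀ δ ×ˢ K
  have hfderiv : ContinuousOn (fun p => fderiv ℝ (uncurry Φ) (G p)) S :=
    (hΦ.continuousOn_fderiv_of_isOpen hU le_rfl).comp hG.continuousOn hSU
  obtain ⟨C, hC⟩ := ((isCompact_closedBall τ₀ δ).prod hK).exists_bound_of_continuousOn hfderiv
  have hderiv : ∀ τ ∈ closedBall τ₀ δ, ∀ y ∈ K,
      HasDerivAt (fun t => Φ t (g y)) (fderiv ℝ (uncurry Φ) (τ, g y) (1, 0)) τ := by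
    intro τ hτ y hy
    have hτy : (τ, g y) ∈ U := hSU (x := (τ, y)) ⟨hτ, hy⟩
    exact ((hΦ.contDiffAt (hU.mem_nhds hτy)).differentiableAt one_ne_zero).hasFDerivAt
      |>.comp_hasDerivAt (f := fun t => (t, g y)) τ
        ((hasDerivAt_id' τ).prodMk (hasDerivAt_const τ (g y)))
  have hcont : ∀ τ ∈ closedBall τ₀ δ, ContinuousOn (fun y => Φ τ (g y)) K := fun τ hτ =>
    hΦ.continuousOn.comp (hG.comp (Continuous.prodMk_right τ)).continuousOn
      fun y hy => hSU ⟨hτ, hy⟩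
  have hYfin : μ Y ≠ ⊤ := (measure_mono hYK).trans_lt hK.measure_lt_top |>.ne
  have hτ₀ : τ₀ ∈ closedBall τ₀ δ := mem_closedBall_self hδ.le
  have key := hasDerivAt_integral_of_dominated_loc_of_deriv_le (μ := μ.restrict Y)
    (F' := fun τ y => fderiv ℝ (uncurry Φ) (τ, g y) (1, 0))
    (bound := fun _ => C * ‖((1 : ℝ), (0 : Z))‖) (ball_mem_nhds τ₀ hδ)
    (eventually_of_mem (ball_mem_nhds τ₀ hδ) fun τ hτ =>
      ((hcont τ (ball_subset_closedBall hτ)).mono hYK).aestronglyMeasurable hY)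
    (((hcont τ₀ hτ₀).integrableOn_compact hK).mono_set hYK)
    ?_ ?_ (integrableOn_const hYfin)
    ((ae_restrict_mem hY).mono fun y hy τ hτ => hderiv τ (ball_subset_closedBall hτ) y (hYK hy))
  · rw [← setIntegral_congr_fun hY fun y hy => (hderiv τ₀ hτ₀ y (hYK hy)).unique (hΦ' y (hYK hy))]
    exact key.2
  · refine (ContinuousOn.mono ?_ hYK).aestronglyMeasurable hY
    exact (hfderiv.comp (Continuous.prodMk_right τ₀).continuousOn fun y hy => ⟨hτ₀, hy⟩).clm_apply
      continuousOn_const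
  · exact (ae_restrict_mem hY).mono fun y hy τ hτ =>
      ((fderiv ℝ (uncurry Φ) (τ, g y)).le_opNorm _).trans
        (mul_le_mul_of_nonneg_right (hC (τ, y) ⟨ball_subset_closedBall hτ, hYK hy⟩) (norm_nonneg _))

theorem Continuous.integrableOn_of_isBounded {X E : Type*} [MetricSpace X] [ProperSpace X]
    [MeasurableSpace X] [OpensMeasurableSpace X] {μ : Measure X} [IsFiniteMeasureOnCompacts μ]
    [NormedAddCommGroup E] {f : X → E} (hf : Continuous f) {s : Set X}
    (hs : Bornology.IsBounded s) : IntegrableOn f s μ :=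
  (hf.continuousOn.integrableOn_compact hs.isCompact_closure).mono_set subset_closure

theorem hasDerivAt_det_one_add_smul {𝕜 ι : Type*} [NontriviallyNormedField 𝕜] [Fintype ι]
    [DecidableEq ι] (M : Matrix ι ι 𝕜) :
    HasDerivAt (fun t : 𝕜 => (1 + t • M).det) M.trace 0 := by
  have hpoly := (det (1 + (Polynomial.X : Polynomial 𝕜) • M.map Polynomial.C)).hasDerivAt 0
  rw [derivative_det_one_add_X_smul] at hpoly
  convert hpoly using 2 with t
  rw [← Polynomial.coe_evalRingHom, RingHom.map_det]
  congr 1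
  ext i j
  simp [one_apply, apply_ite (Polynomial.eval t)]
  ring

theorem sum_sum_kdelta {n : ℕ} (a d : ℝ) (J B C : Matrix (Fin n) (Fin n) ℝ) (i r k s : Fin n) :
    ∑ j, ∑ l, a * (kdelta r j * kdelta s l * d - kdelta j r * J l s - kdelta l s * J j r) *
        B k l * C i j
      = a * (d * B k s * C i r - ((B * J) k s * C i r + B k s * (C * J) i r)) := by
  simp only [kdelta, mul_sub, sub_mul, Finset.sum_sub_distrib, ite_mul, mul_ite, one_mul, mul_one,
    zero_mul, mul_zero, Finset.sum_ite_eq, Finset.sum_ite_eq', Finset.mem_univ, if_true,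
    Matrix.mul_apply, Finset.sum_ite_irrel, Finset.sum_const_zero]
  simp only [mul_add, Finset.mul_sum, Finset.sum_mul, sub_sub, ← Finset.sum_add_distrib]
  congr 1
  · ring
  · exact Finset.sum_congr rfl fun x _ => by ring

theorem continuous_jacMat {n : ℕ} {u : (Fin n → ℝ) → (Fin n → ℝ)} (hu : ContDiff ℝ 1 u) :
    Continuous (jacMat n u) :=
  continuous_matrix fun k l =>
    (continuous_apply k).comp
      ((hu.continuous_fderiv one_ne_zero).clm_apply (continuous_const (y := Pi.single l 1)))

section TransportedIntegrand

variable {n : ℕ}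

/-- The integrand of `aForm` with free matrices `J, B, C` in place of `DV y, Du y, Dv y`, so that
it is `C¹` jointly in all its arguments although `y ↦ DV y` is merely continuous. -/
noncomputable def transportedIntegrand
    (A : ℝ × (Fin n → ℝ) → Fin n → Fin n → Fin n → Fin n → ℝ) (τ : ℝ) (y : Fin n → ℝ)
    (J B C : Matrix (Fin n) (Fin n) ℝ) : ℝ :=
  (∑ i, ∑ r, ∑ k, ∑ s, A (τ, y) i r k s * (B * (1 + τ • J)⁻¹) k s * (C * (1 + τ • J)⁻¹) i r) *
    (1 + τ • J).det

/- At `J, B, C = DV y, Du y, Dv y`, `shapeDerivTerm` and `coeffDerivTerm` are definitionally the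
two integrands of the theorem (`pder n u l k y = jacMat n u y k l`, `divg = trace ∘ jacMat`). -/
noncomputable def shapeDerivTerm (A : ℝ × (Fin n → ℝ) → Fin n → Fin n → Fin n → Fin n → ℝ)
    (y : Fin n → ℝ) (J B C : Matrix (Fin n) (Fin n) ℝ) : ℝ :=
  ∑ i, ∑ r, ∑ k, ∑ s, ∑ j, ∑ l, A (0, y) i r k s *
    (kdelta r j * kdelta s l * J.trace - kdelta j r * J l s - kdelta l s * J j r) * B k l * C i j

noncomputable def coeffDerivTerm (A : ℝ × (Fin n → ℝ) → Fin n → Fin n → Fin n → Fin n → ℝ)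
    (y : Fin n → ℝ) (B C : Matrix (Fin n) (Fin n) ℝ) : ℝ :=
  ∑ i, ∑ r, ∑ k, ∑ s, fderiv ℝ (fun p => A p i r k s) (0, y) (1, 0) * B k s * C i r

variable {Y : Set (Fin n → ℝ)} {V u v : (Fin n → ℝ) → (Fin n → ℝ)}
  {A : ℝ × (Fin n → ℝ) → Fin n → Fin n → Fin n → Fin n → ℝ}

theorem aForm_eq_div_Mfun_mul :
    aForm n Y V u v A = fun τ => 1 / Mfun n Y V τ *
      ∫ y in Y, transportedIntegrand A τ y (jacMat n V y) (jacMat n u y) (jacMat n v y) :=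
  rfl

theorem Mfun_zero : Mfun n Y V 0 = volume.real Y := by
  simp [Mfun]

theorem continuous_shapeDerivTerm (hV : ContDiff ℝ 1 V) (hu : ContDiff ℝ 1 u)
    (hv : ContDiff ℝ 1 v) (hA : ∀ i r k s, Continuous fun p => A p i r k s) :
    Continuous fun y => shapeDerivTerm A y (jacMat n V y) (jacMat n u y) (jacMat n v y) := by
  have hJ := continuous_jacMat hV
  have hB := continuous_jacMat hu
  have hC := continuous_jacMat hv
  unfold shapeDerivTerm
  fun_prop

theorem continuous_coeffDerivTerm (hu : ContDiff ℝ 1 u) (hv : ContDiff ℝ 1 v)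
    (hA : ∀ i r k s, ContDiff ℝ 1 fun p => A p i r k s) :
    Continuous fun y => coeffDerivTerm A y (jacMat n u y) (jacMat n v y) := by
  have hA' := fun i r k s => (hA i r k s).continuous_fderiv one_ne_zero
  have hB := continuous_jacMat hu
  have hC := continuous_jacMat hv
  unfold coeffDerivTerm
  fun_prop

end TransportedIntegrand

section LinftyOpCalculus

/- Any norm on matrices would do; this one makes them a normed algebra, so that the smoothness
of `Ring.inverse` applies. -/
attribute [local instance] Matrix.linftyOpNormedAddCommGroup Matrix.linftyOpNormedSpace
  Matrix.linftyOpNormedRing Matrix.linftyOpNormedAlgebra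

variable {𝕜 ι : Type*} [NontriviallyNormedField 𝕜] [CompleteSpace 𝕜] [Fintype ι]

theorem contDiff_matrix_apply (i j : ι) {m : WithTop ℕ∞} :
    ContDiff 𝕜 m fun M : Matrix ι ι 𝕜 => M i j :=
  (LinearMap.toContinuousLinearMap (entryLinearMap 𝕜 𝕜 i j)).contDiff

theorem HasDerivAt.matrix_apply {f : 𝕜 → Matrix ι ι 𝕜} {f' : Matrix ι ι 𝕜} {t : 𝕜}
    (hf : HasDerivAt f f' t) (i j : ι) : HasDerivAt (fun s => f s i j) (f' i j) t :=
  (LinearMap.toContinuousLinearMap (entryLinearMap 𝕜 𝕜 i j)).hasFDerivAt.comp_hasDerivAt t hf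

theorem contDiff_det [DecidableEq ι] {m : WithTop ℕ∞} :
    ContDiff 𝕜 m fun M : Matrix ι ι 𝕜 => M.det := by
  simp only [det_apply']
  exact ContDiff.sum fun σ _ =>
    contDiff_const.mul (contDiff_prod fun i _ => contDiff_matrix_apply _ _)

/- Stated with the uniformity of the norm: instance search does not identify it with the
product uniformity that `CompleteSpace (Matrix ι ι 𝕜)` would pick up. -/
theorem completeSpace_matrix_linftyOp [DecidableEq ι] :
    @CompleteSpace (Matrix ι ι 𝕜) PseudoMetricSpace.toUniformSpace :=
  FiniteDimensional.complete 𝕜 _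

attribute [local instance] completeSpace_matrix_linftyOp

theorem contDiffAt_matrix_inv [DecidableEq ι] {M : Matrix ι ι 𝕜} (hM : IsUnit M)
    {m : WithTop ℕ∞} : ContDiffAt 𝕜 m (fun M : Matrix ι ι 𝕜 => M⁻¹) M := by
  simp only [nonsing_inv_eq_ringInverse]
  exact hM.unit_spec ▸ contDiffAt_ringInverse 𝕜 hM.unit

theorem hasDerivAt_inv_one_add_smul [DecidableEq ι] (M : Matrix ι ι 𝕜) :
    HasDerivAt (fun t : 𝕜 => (1 + t • M)⁻¹) (-M) 0 := by
  have hline := ((hasDerivAt_id' (0 : 𝕜)).smul_const M).const_add 1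
  rw [one_smul] at hline
  have hinv := (hasFDerivAt_ringInverse (𝕜 := 𝕜) (1 : (Matrix ι ι 𝕜)ˣ)).comp_hasDerivAt_of_eq 0
    hline (by simp)
  simp only [nonsing_inv_eq_ringInverse]
  exact hinv.congr_deriv (by simp)

variable {n : ℕ} {Y : Set (Fin n → ℝ)} {V u v : (Fin n → ℝ) → (Fin n → ℝ)}
  {A : ℝ × (Fin n → ℝ) → Fin n → Fin n → Fin n → Fin n → ℝ}

theorem hasDerivAt_transportedIntegrand_zero {y : Fin n → ℝ}
    (hA : ∀ i r k s, DifferentiableAt ℝ (fun p => A p i r k s) (0, y))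
    (J B C : Matrix (Fin n) (Fin n) ℝ) :
    HasDerivAt (fun τ => transportedIntegrand A τ y J B C)
      (shapeDerivTerm A y J B C + coeffDerivTerm A y B C) 0 := by
  have hP := hasDerivAt_inv_one_add_smul J
  have hAτ : ∀ i r k s, HasDerivAt (fun τ => A (τ, y) i r k s)
      (fderiv ℝ (fun p => A p i r k s) (0, y) (1, 0)) 0 := fun i r k s =>
    (hA i r k s).hasFDerivAt.comp_hasDerivAt (f := fun τ => (τ, y)) 0
      ((hasDerivAt_id' 0).prodMk (hasDerivAt_const 0 y))
  have hBP := fun k s => (hP.const_mul B).matrix_apply k s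
  have hCP := fun i r => (hP.const_mul C).matrix_apply i r
  have hsum := HasDerivAt.fun_sum (u := .univ) fun i _ => HasDerivAt.fun_sum (u := .univ) fun r _ =>
    HasDerivAt.fun_sum (u := .univ) fun k _ => HasDerivAt.fun_sum (u := .univ) fun s _ =>
      ((hAτ i r k s).fun_mul (hBP k s)).fun_mul (hCP i r)
  refine (hsum.fun_mul (hasDerivAt_det_one_add_smul J)).congr_deriv ?_
  simp only [shapeDerivTerm, coeffDerivTerm, sum_sum_kdelta, zero_smul, add_zero, inv_one, det_one,
    mul_one, Matrix.mul_neg, Matrix.neg_apply, Finset.sum_mul, ← Finset.sum_add_distrib]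
  refine Finset.sum_congr rfl fun i _ => Finset.sum_congr rfl fun r _ =>
    Finset.sum_congr rfl fun k _ => Finset.sum_congr rfl fun s _ => ?_
  ring

theorem contDiffOn_transportedIntegrand (hA : ∀ i r k s, ContDiff ℝ 1 fun p => A p i r k s) :
    ContDiffOn ℝ 1
      (uncurry fun τ (z : (Fin n → ℝ) × Matrix (Fin n) (Fin n) ℝ × Matrix (Fin n) (Fin n) ℝ ×
          Matrix (Fin n) (Fin n) ℝ) => transportedIntegrand A τ z.1 z.2.1 z.2.2.1 z.2.2.2)
      {p | IsUnit (1 + p.1 • p.2.2.1)} := by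
  intro p hp
  have hE : ContDiff ℝ 1 fun p : ℝ × (Fin n → ℝ) × Matrix (Fin n) (Fin n) ℝ ×
      Matrix (Fin n) (Fin n) ℝ × Matrix (Fin n) (Fin n) ℝ => 1 + p.1 • p.2.2.1 := by
    fun_prop
  have hP := (contDiffAt_matrix_inv (m := 1) hp).comp p hE.contDiffAt
  refine ContDiffAt.contDiffWithinAt <| ContDiffAt.mul (ContDiffAt.sum fun i _ =>
    ContDiffAt.sum fun r _ => ContDiffAt.sum fun k _ => ContDiffAt.sum fun s _ => ?_)
    (contDiff_det.comp hE).contDiffAt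
  exact (((hA i r k s).comp (by fun_prop)).contDiffAt.mul
    ((contDiff_matrix_apply k s).contDiffAt.comp p (by fun_prop))).mul
    ((contDiff_matrix_apply i r).contDiffAt.comp p (by fun_prop))

theorem hasDerivAt_Mfun_zero (hY : MeasurableSet Y) (hYbdd : Bornology.IsBounded Y)
    (hV : ContDiff ℝ 1 V) : HasDerivAt (Mfun n Y V) (∫ y in Y, divg n V y) 0 := by
  have hdet : ContDiff ℝ 1
      (uncurry fun (τ : ℝ) (J : Matrix (Fin n) (Fin n) ℝ) => (1 + τ • J).det) :=
    contDiff_det.comp (by fun_prop)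
  exact hasDerivAt_setIntegral_of_contDiffOn isOpen_univ hdet.contDiffOn (continuous_jacMat hV)
    hYbdd.isCompact_closure subset_closure hY (fun _ _ => trivial)
    fun y _ => hasDerivAt_det_one_add_smul (jacMat n V y)

theorem hasDerivAt_integral_transportedIntegrand_zero (hY : MeasurableSet Y)
    (hYbdd : Bornology.IsBounded Y) (hV : ContDiff ℝ 1 V) (hu : ContDiff ℝ 1 u)
    (hv : ContDiff ℝ 1 v) (hA : ∀ i r k s, ContDiff ℝ 1 fun p => A p i r k s) :
    HasDerivAt
      (fun τ => ∫ y in Y, transportedIntegrand A τ y (jacMat n V y) (jacMat n u y) (jacMat n v y))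
      (∫ y in Y, (shapeDerivTerm A y (jacMat n V y) (jacMat n u y) (jacMat n v y)
        + coeffDerivTerm A y (jacMat n u y) (jacMat n v y))) 0 := by
  have hU : IsOpen {p : ℝ × (Fin n → ℝ) × Matrix (Fin n) (Fin n) ℝ × Matrix (Fin n) (Fin n) ℝ ×
      Matrix (Fin n) (Fin n) ℝ | IsUnit (1 + p.1 • p.2.2.1)} :=
    Units.isOpen.preimage (by fun_prop)
  have hg : Continuous fun y => (y, jacMat n V y, jacMat n u y, jacMat n v y) :=
    continuous_id.prodMk <| (continuous_jacMat hV).prodMk <|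
      (continuous_jacMat hu).prodMk (continuous_jacMat hv)
  exact hasDerivAt_setIntegral_of_contDiffOn hU (contDiffOn_transportedIntegrand hA) hg
    hYbdd.isCompact_closure subset_closure hY (fun _ _ => by simp)
    fun y _ => hasDerivAt_transportedIntegrand_zero
      (fun i r k s => (hA i r k s).differentiable one_ne_zero _) _ _ _

end LinftyOpCalculus

theorem bilinear_form_shape_sensitivity_general (n : ℕ)
    (Y : Set (Fin n → ℝ)) (hYmeas : MeasurableSet Y)
    (hYbdd : Bornology.IsBounded Y) (hYpos : 0 < volume Y)
    (V u v : (Fin n → ℝ) → (Fin n → ℝ))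
    (hV : ContDiff ℝ 1 V) (hu : ContDiff ℝ 1 u) (hv : ContDiff ℝ 1 v)
    (A : ℝ × (Fin n → ℝ) → Fin n → Fin n → Fin n → Fin n → ℝ)
    (hA : ∀ i r k s : Fin n, ContDiff ℝ 1 fun p => A p i r k s) :
    ∃ ε > 0,
      (∀ τ : ℝ, |τ| < ε → Mfun n Y V τ ≠ 0) ∧
      HasDerivAt (aForm n Y V u v A)
        ((1 / Mfun n Y V 0) *
            (∫ y in Y, ∑ i, ∑ r, ∑ k, ∑ s, ∑ j, ∑ l,
              A (0, y) i r k s *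
                (kdelta r j * kdelta s l * divg n V y
                  - kdelta j r * pder n V s l y
                  - kdelta l s * pder n V r j y) *
                pder n u l k y * pder n v j i y)
          + (1 / Mfun n Y V 0) *
            (∫ y in Y, ∑ i, ∑ r, ∑ k, ∑ s,
              (fderiv ℝ (fun p => A p i r k s) (0, y) (1, 0)) *
                pder n u s k y * pder n v r i y)
          - aForm n Y V u v A 0 *
              ((1 / Mfun n Y V 0) * ∫ y in Y, divg n V y)) 0 := by
  have hM := hasDerivAt_Mfun_zero hYmeas hYbdd hV
  have hN := hasDerivAt_integral_transportedIntegrand_zero hYmeas hYbdd hV hu hv hA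
  have hM0 : Mfun n Y V 0 ≠ 0 := by
    rw [Mfun_zero]
    exact (ENNReal.toReal_pos hYpos.ne' hYbdd.measure_lt_top.ne).ne'
  obtain ⟨ε, hε, hMne⟩ := eventually_nhds_iff_ball.mp (hM.continuousAt.eventually_ne hM0)
  refine ⟨ε, hε, fun τ hτ => hMne τ (by simpa [Real.dist_eq] using hτ), ?_⟩
  rw [integral_add
    ((continuous_shapeDerivTerm hV hu hv fun i r k s => (hA i r k s).continuous)
      |>.integrableOn_of_isBounded hYbdd)
    ((continuous_coeffDerivTerm hu hv hA).integrableOn_of_isBounded hYbdd)] at hN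
  show HasDerivAt _
    (1 / Mfun n Y V 0 * (∫ y in Y, shapeDerivTerm A y (jacMat n V y) (jacMat n u y) (jacMat n v y))
      + 1 / Mfun n Y V 0 * (∫ y in Y, coeffDerivTerm A y (jacMat n u y) (jacMat n v y))
      - aForm n Y V u v A 0 * (1 / Mfun n Y V 0 * ∫ y in Y, divg n V y)) 0
  rw [aForm_eq_div_Mfun_mul]
  refine (((hasDerivAt_const (0 : ℝ) (1 : ℝ)).fun_div hM hM0).fun_mul hN).congr_deriv ?_
  field_simp
  ring

/-- shape sensitivity of the averaged transported bilinear form: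
`a(τ)` is well defined for `|τ| < ε`, differentiable at `τ = 0`, and
`a'(0) = (1/|Y|)·∫_Y Σ A_{irks}(0,y)·(δ_{rj}δ_{sl}·div V − δ_{jr}∂_s V_l − δ_{ls}∂_r V_j)·∂_l u_k·∂_j v_i dy
       + (1/|Y|)·∫_Y Σ ∂_τ A_{irks}(0,y)·∂_s u_k·∂_r v_i dy
       − a(0)·(1/|Y|)·∫_Y div V dy`, where `|Y| = M(0)`. -/
theorem bilinear_form_shape_sensitivity (n : ℕ) (hn : 1 ≤ n)
    (Y : Set (Fin n → ℝ)) (hYmeas : MeasurableSet Y)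
    (hYbdd : Bornology.IsBounded Y) (hYpos : 0 < volume Y)
    (V u v : (Fin n → ℝ) → (Fin n → ℝ))
    (hV : ContDiff ℝ 1 V) (hu : ContDiff ℝ 1 u) (hv : ContDiff ℝ 1 v)
    (A : ℝ × (Fin n → ℝ) → Fin n → Fin n → Fin n → Fin n → ℝ)
    (hA : ∀ i r k s : Fin n, ContDiff ℝ 1 fun p => A p i r k s) :
    ∃ ε > 0,
      (∀ τ : ℝ, |τ| < ε → Mfun n Y V τ ≠ 0) ∧
      HasDerivAt (aForm n Y V u v A)
        ((1 / Mfun n Y V 0) *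
            (∫ y in Y, ∑ i, ∑ r, ∑ k, ∑ s, ∑ j, ∑ l,
              A (0, y) i r k s *
                (kdelta r j * kdelta s l * divg n V y
                  - kdelta j r * pder n V s l y
                  - kdelta l s * pder n V r j y) *
                pder n u l k y * pder n v j i y)
          + (1 / Mfun n Y V 0) *
            (∫ y in Y, ∑ i, ∑ r, ∑ k, ∑ s,
              (fderiv ℝ (fun p => A p i r k s) (0, y) (1, 0)) *
                pder n u s k y * pder n v r i y)
          - aForm n Y V u v A 0 *
              ((1 / Mfun n Y V 0) * ∫ y in Y, divg n V y)) 0 :=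
  bilinear_form_shape_sensitivity_general n Y hYmeas hYbdd hYpos V u v hV hu hv A hA
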